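/- Every almost inner derivation of the Lie algebra n_n(K) of strictly upper-triangular n×n matrices over a field K is inner: AID(n_n(K)) = Inn(n_n(K)) for all n ≥ 2. -/

import Mathlib

attribute [local instance 100] LieRing.ofAssociativeRing

/-- The Lie algebra `n_n(K)` of strictly upper triangular `n × n` matrices,
with bracket `⁅A, B⁆ = A * B - B * A`. -/
def strictlyUpperTriangular (K : Type*) [Field K] (n : ℕ) :
    LieSubalgebra K (Matrix (Fin n) (Fin n) K) where
  carrier := {M | ∀ i j : Fin n, j ≤ i → M i j = 0}
  add_mem' := by
    intro A B hA hB i j h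
    show A i j + B i j = 0
    rw [hA i j h, hB i j h, add_zero]
  zero_mem' := by intro i j _; rfl
  smul_mem' := by
    intro c A hA i j h
    show c * A i j = 0
    rw [hA i j h, mul_zero]
  lie_mem' := by
    intro A B hA hB
    have key : ∀ X Y : Matrix (Fin n) (Fin n) K,
        (∀ i j : Fin n, j ≤ i → X i j = 0) → (∀ i j : Fin n, j ≤ i → Y i j = 0) →
        ∀ i j : Fin n, j ≤ i → (X * Y) i j = 0 := by
      intro X Y hX hY i j h
      rw [Matrix.mul_apply]
      apply Finset.sum_eq_zero
      intro k _
      rcases le_or_gt k i with hk | hk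
      · rw [hX i k hk, zero_mul]
      · rw [hY k j (le_of_lt (lt_of_le_of_lt h hk)), mul_zero]
    intro i j h
    show (A * B - B * A) i j = 0
    rw [Matrix.sub_apply, key A B hA hB i j h, key B A hB hA i j h, sub_zero]

/-!
Write `E_ab` for the matrix unit `single K a b _`. If `D` is almost inner, then
`D E_ab = ⁅W, E_ab⁆` for some `W`, so `D E_ab` vanishes outside row `a` and column `b`. Applying almost innerness to `E_ab + E_cd` with `a < b < c < d` gives the
compatibility `(D E_ab) a c + (D E_cd) b d = 0`. This makes it possible to glue one `Y` out of the
columns of the `D E_{c,c+1}` and the rows of the `D E_{r-1,r}` with `D E_{a,a+1} = ⁅Y, E_{a,a+1}⁆`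
for all `a`. The `E_{a,a+1}` generate `n_n(K)` as a Lie algebra, hence `D = ad Y`.
-/

def LieDerivation.IsAlmostInner {R L : Type*} [CommRing R] [LieRing L] [LieAlgebra R L]
    (D : LieDerivation R L L) : Prop :=
  ∀ x, ∃ y : L, D x = ⁅y, x⁆

namespace strictlyUpperTriangular

variable {K : Type*} [Field K] {n : ℕ}

local notation "𝔫" => strictlyUpperTriangular K n
local notation "𝔤𝔩" => Matrix (Fin n) (Fin n) K

lemma coe_lie (X Y : 𝔫) : ((⁅X, Y⁆ : 𝔫) : 𝔤𝔩) = X * Y - Y * X := rfl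

lemma apply_eq_zero (X : 𝔫) {i j : Fin n} (h : j ≤ i) : (X : 𝔤𝔩) i j = 0 := X.2 i j h

variable (K) in
def single (a b : Fin n) (h : a < b) : 𝔫 :=
  ⟨Matrix.single a b 1, fun i j hji ↦ by
    rw [Matrix.single_apply]
    exact if_neg fun ⟨hi, hj⟩ ↦ (hi ▸ hj ▸ h).not_ge hji⟩

lemma coe_single {a b : Fin n} (h : a < b) : (single K a b h : 𝔤𝔩) = Matrix.single a b 1 := rfl

section single

variable {a b : Fin n} (h : a < b) (Z : strictlyUpperTriangular K n)

lemma lie_single_apply (k l : Fin n) :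
    ((⁅Z, single K a b h⁆ : 𝔫) : 𝔤𝔩) k l =
      (if l = b then (Z : 𝔤𝔩) k a else 0) - (if k = a then (Z : 𝔤𝔩) b l else 0) := by
  rw [coe_lie, coe_single, Matrix.sub_apply]
  congr 1
  · split_ifs with hl
    · rw [hl, Matrix.mul_single_apply_same, mul_one]
    · exact Matrix.mul_single_apply_of_ne _ _ _ _ _ hl _
  · split_ifs with hk
    · rw [hk, Matrix.single_mul_apply_same, one_mul]
    · exact Matrix.single_mul_apply_of_ne _ _ _ _ _ hk _

lemma lie_single_apply_of_ne_of_ne {k l : Fin n} (hk : k ≠ a) (hl : l ≠ b) :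
    ((⁅Z, single K a b h⁆ : 𝔫) : 𝔤𝔩) k l = 0 := by
  simp [lie_single_apply, hk, hl]

lemma lie_single_apply_col {k : Fin n} (hk : k ≠ a) :
    ((⁅Z, single K a b h⁆ : 𝔫) : 𝔤𝔩) k b = (Z : 𝔤𝔩) k a := by
  simp [lie_single_apply, hk]

lemma lie_single_apply_row {l : Fin n} (hl : l ≠ b) :
    ((⁅Z, single K a b h⁆ : 𝔫) : 𝔤𝔩) a l = -(Z : 𝔤𝔩) b l := by
  simp [lie_single_apply, hl]

lemma lie_single_eq_zero (hcol : ∀ k, (Z : 𝔤𝔩) k a = 0) (hrow : ∀ l, (Z : 𝔤𝔩) b l = 0) :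
    ⁅Z, single K a b h⁆ = 0 := by
  ext k l
  simp [lie_single_apply, hcol, hrow]

end single

lemma single_lie_single {a b c : Fin n} (hab : a < b) (hbc : b < c) :
    ⁅single K a b hab, single K b c hbc⁆ = single K a c (hab.trans hbc) := by
  ext : 1
  rw [coe_lie, coe_single, coe_single, coe_single, Matrix.single_mul_single_same, mul_one,
    Matrix.single_mul_single_of_ne (h := (hab.trans hbc).ne'), sub_zero]

lemma eq_sum_single (X : 𝔫) :
    X = ∑ a, ∑ b, if h : a < b then (X : 𝔤𝔩) a b • single K a b h else 0 := by
  ext : 1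
  simp only [AddSubmonoidClass.coe_finsetSum]
  refine (Matrix.matrix_eq_sum_single _).trans
    (Finset.sum_congr rfl fun a _ ↦ Finset.sum_congr rfl fun b _ ↦ ?_)
  split_ifs with h
  · rw [SetLike.val_smul, coe_single, Matrix.smul_single, smul_eq_mul, mul_one]
  · rw [apply_eq_zero X (not_lt.1 h), Matrix.single_zero, ZeroMemClass.coe_zero]

variable (K n) in
def superdiagonal : Set 𝔫 :=
  {x | ∃ (a b : Fin n) (h : a < b), (b : ℕ) = a + 1 ∧ single K a b h = x}

lemma single_mem_lieSpan_superdiagonal {a b : Fin n} (h : a < b) :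
    single K a b h ∈ LieSubalgebra.lieSpan K 𝔫 (superdiagonal K n) := by
  obtain ⟨d, hd⟩ : ∃ d, (b : ℕ) = a + d + 1 := ⟨b - a - 1, by omega⟩
  induction d generalizing a with
  | zero => exact LieSubalgebra.subset_lieSpan ⟨a, b, h, hd, rfl⟩
  | succ d ih =>
    let m : Fin n := ⟨a + 1, by omega⟩
    have ham : a < m := Nat.lt_succ_self _
    have hmb : m < b := show (a : ℕ) + 1 < b by omega
    rw [← single_lie_single ham hmb]
    exact LieSubalgebra.lie_mem _ (LieSubalgebra.subset_lieSpan ⟨a, m, ham, rfl, rfl⟩)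
      (ih hmb (by simp only [m]; omega))

lemma lieSpan_superdiagonal_eq_top : LieSubalgebra.lieSpan K 𝔫 (superdiagonal K n) = ⊤ := by
  refine eq_top_iff.2 fun X _ ↦ ?_
  rw [eq_sum_single X]
  refine sum_mem fun a _ ↦ sum_mem fun b _ ↦ ?_
  split_ifs with h
  · exact LieSubalgebra.smul_mem _ _ (single_mem_lieSpan_superdiagonal h)
  · exact zero_mem _

section AlmostInner

variable {D : LieDerivation K (strictlyUpperTriangular K n) (strictlyUpperTriangular K n)}

lemma apply_single_apply_of_ne_of_ne (hD : D.IsAlmostInner) {a b k l : Fin n} (h : a < b)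
    (hk : k ≠ a) (hl : l ≠ b) : (D (single K a b h) : 𝔤𝔩) k l = 0 := by
  obtain ⟨W, hW⟩ := hD (single K a b h)
  rw [hW]
  exact lie_single_apply_of_ne_of_ne h W hk hl

lemma apply_single_apply_add_apply_single_apply_eq_zero (hD : D.IsAlmostInner)
    {a b c d : Fin n} (hab : a < b) (hbc : b < c) (hcd : c < d) :
    (D (single K a b hab) : 𝔤𝔩) a c + (D (single K c d hcd) : 𝔤𝔩) b d = 0 := by
  obtain ⟨Z, hZ⟩ := hD (single K a b hab + single K c d hcd)
  have hsum : ∀ k l, (D (single K a b hab) : 𝔤𝔩) k l + (D (single K c d hcd) : 𝔤𝔩) k l =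
      ((⁅Z, single K a b hab⁆ : 𝔫) : 𝔤𝔩) k l + ((⁅Z, single K c d hcd⁆ : 𝔫) : 𝔤𝔩) k l := by
    intro k l
    rw [← Matrix.add_apply, ← Matrix.add_apply, ← AddMemClass.coe_add, ← AddMemClass.coe_add,
      ← map_add, hZ, lie_add]
  have hac := hsum a c
  have hbd := hsum b d
  rw [apply_single_apply_of_ne_of_ne hD hcd (hab.trans hbc).ne hcd.ne,
    lie_single_apply_row hab Z hbc.ne',
    lie_single_apply_of_ne_of_ne hcd Z (hab.trans hbc).ne hcd.ne] at hac
  rw [apply_single_apply_of_ne_of_ne hD hab hab.ne' (hbc.trans hcd).ne',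
    lie_single_apply_of_ne_of_ne hab Z hab.ne' (hbc.trans hcd).ne',
    lie_single_apply_col hcd Z hbc.ne] at hbd
  linear_combination hac + hbd

/- Column `c` is read off `D E_{c,c+1}`; the last column, which has no `E_{c,c+1}`, is read off
row by row from `D E_{r-1,r}`. The corner entry `(0, n-1)` does not occur in any
`⁅Y, E_{a,a+1}⁆` and is set to `0`. -/
variable (D) in
def innerWitness : 𝔫 where
  val r c :=
    if r < c then
      if hc : (c : ℕ) + 1 < n then
        (D (single K c ⟨c + 1, hc⟩ (Nat.lt_succ_self _)) : 𝔤𝔩) r ⟨c + 1, hc⟩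
      else if hr : (r : ℕ) ≠ 0 then
        -(D (single K ⟨r - 1, by omega⟩ r (show (r : ℕ) - 1 < r by omega)) : 𝔤𝔩)
          ⟨r - 1, by omega⟩ c
      else 0
    else 0
  property _ _ h := if_neg h.not_gt

lemma innerWitness_apply_of_lt {a b k : Fin n} (h : a < b) (hb : (b : ℕ) = a + 1) (hk : k < a) :
    (innerWitness D : 𝔤𝔩) k a = (D (single K a b h) : 𝔤𝔩) k b := by
  have ha : (a : ℕ) + 1 < n := hb ▸ b.2
  obtain rfl : b = ⟨a + 1, ha⟩ := Fin.ext hb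
  exact (if_pos hk).trans (dif_pos _)

lemma innerWitness_apply_of_gt (hD : D.IsAlmostInner) {a b l : Fin n} (h : a < b)
    (hb : (b : ℕ) = a + 1) (hl : b < l) :
    (innerWitness D : 𝔤𝔩) b l = -(D (single K a b h) : 𝔤𝔩) a l := by
  refine (if_pos hl).trans ?_
  split_ifs with hl' hb0
  · rw [eq_neg_iff_add_eq_zero, add_comm]
    exact apply_single_apply_add_apply_single_apply_eq_zero hD h hl _
  · have hb' : (b : ℕ) - 1 < n := by omega
    obtain rfl : a = ⟨b - 1, hb'⟩ := Fin.ext (by simp only; omega)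
    rfl
  · omega

lemma apply_single_eq_lie_innerWitness (hD : D.IsAlmostInner) {a b : Fin n} (h : a < b)
    (hb : (b : ℕ) = a + 1) : D (single K a b h) = ⁅innerWitness D, single K a b h⁆ := by
  obtain ⟨W, hW⟩ := hD (single K a b h)
  rw [hW, ← sub_eq_zero, ← sub_lie]
  apply lie_single_eq_zero
  · intro k
    rcases lt_or_ge k a with hk | hk
    · show (W : 𝔤𝔩) k a - (innerWitness D : 𝔤𝔩) k a = 0
      rw [innerWitness_apply_of_lt h hb hk, hW, lie_single_apply_col h W hk.ne, sub_self]
    · exact apply_eq_zero _ hk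
  · intro l
    rcases lt_or_ge b l with hl | hl
    · show (W : 𝔤𝔩) b l - (innerWitness D : 𝔤𝔩) b l = 0
      rw [innerWitness_apply_of_gt hD h hb hl, hW, lie_single_apply_row h W hl.ne', neg_neg,
        sub_self]
    · exact apply_eq_zero _ hl

end AlmostInner

end strictlyUpperTriangular

theorem stmt18_general {K : Type*} [Field K] (n : ℕ)
    (D : LieDerivation K (strictlyUpperTriangular K n) (strictlyUpperTriangular K n))
    (hD : ∀ X : strictlyUpperTriangular K n, ∃ Y : strictlyUpperTriangular K n,
      D X = ⁅Y, X⁆) :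
    ∃ Y : strictlyUpperTriangular K n, ∀ X : strictlyUpperTriangular K n,
      D X = ⁅Y, X⁆ := by
  let Y := strictlyUpperTriangular.innerWitness D
  have hD_eq : D = LieDerivation.ad K _ Y :=
    LieDerivation.ext_of_lieSpan_eq_top _ strictlyUpperTriangular.lieSpan_superdiagonal_eq_top <| by
      rintro _ ⟨a, b, h, hb, rfl⟩
      simpa using strictlyUpperTriangular.apply_single_eq_lie_innerWitness hD h hb
  exact ⟨Y, fun X ↦ (LieDerivation.congr_fun hD_eq X).trans (LieDerivation.ad_apply_apply _ _ _ _)⟩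

/-- Every almost inner derivation of `n_n(K)` is inner, for `n ≥ 2`. -/
theorem stmt18 {K : Type*} [Field K] (n : ℕ) (hn : 2 ≤ n)
    (D : LieDerivation K (strictlyUpperTriangular K n) (strictlyUpperTriangular K n))
    (hD : ∀ X : strictlyUpperTriangular K n, ∃ Y : strictlyUpperTriangular K n,
      D X = ⁅Y, X⁆) :
    ∃ Y : strictlyUpperTriangular K n, ∀ X : strictlyUpperTriangular K n,
      D X = ⁅Y, X⁆ :=
  stmt18_general n D hD
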